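/- arXiv:1610.00565 — 10 statements merged into one kernel-verified Lean document; each statement's English description precedes it below -/
import Mathlib

section
/- Let $I$ be an ideal of $R$, $N$ a 2-absorbing secondary submodule of an $R$-module $M$, $a \in R$, and $L$ a completely irreducible submodule of $M$. If $IaN \subseteq L$, then $a\,\mathrm{sec}(N) \subseteq L$ or $I\,\mathrm{sec}(N) \subseteq L$ or $Ia \subseteq \mathrm{Ann}_R(N)$. -/
open Pointwise

variable {R : Type*} [CommRing R] {M : Type*} [AddCommGroup M] [Module R M]

/-- A nonzero submodule `S` is second if every ring element acts on it
surjectively (`a • S = S`) or as zero (`a • S = ⊥`). -/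
def IsSecond (S : Submodule R M) : Prop :=
  S ≠ ⊥ ∧ ∀ a : R, a • S = S ∨ a • S = ⊥

/-- The second radical of `N`: the sum of all second submodules contained in `N`. -/
def secRad (N : Submodule R M) : Submodule R M :=
  sSup {S : Submodule R M | IsSecond S ∧ S ≤ N}

/-- A proper submodule `L` is completely irreducible if whenever `L` is an
intersection of a family of submodules, it equals one of them. -/
def CompletelyIrreducible (L : Submodule R M) : Prop :=
  L ≠ ⊤ ∧ ∀ s : Set (Submodule R M), L = sInf s → L ∈ s

/-- 2-absorbing secondary submodule. -/
def Is2AbsSecondary (N : Submodule R M) : Prop :=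
  N ≠ ⊥ ∧ ∀ a b : R, ∀ L : Submodule R M, CompletelyIrreducible L →
    (a * b) • N ≤ L →
    a • secRad N ≤ L ∨ b • secRad N ≤ L ∨ (a * b) • N = ⊥

/-- Strongly 2-absorbing secondary submodule. -/
def IsS2AbsSecondary (N : Submodule R M) : Prop :=
  N ≠ ⊥ ∧ ∀ a b : R, ∀ K : Submodule R M,
    (a * b) • N ≤ K →
    a • secRad N ≤ K ∨ b • secRad N ≤ K ∨ (a * b) • N = ⊥

/-- Strongly 2-absorbing second submodule. -/
def IsS2AbsSecond (N : Submodule R M) : Prop :=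
  N ≠ ⊥ ∧ ∀ a b : R, ∀ K : Submodule R M,
    (a * b) • N ≤ K →
    a • N ≤ K ∨ b • N ≤ K ∨ (a * b) • N = ⊥

/-- A 2-absorbing primary ideal. -/
def Is2AbsPrimaryIdeal (I : Ideal R) : Prop :=
  I ≠ ⊤ ∧ ∀ a b c : R, a * b * c ∈ I →
    a * b ∈ I ∨ a * c ∈ I.radical ∨ b * c ∈ I.radical

/-- A comultiplication module: every submodule equals `(0 :_M Ann(N))`. -/
def IsComultiplication (R M : Type*) [CommRing R] [AddCommGroup M] [Module R M] : Prop :=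
  ∀ N : Submodule R M, ∀ m : M, m ∈ N ↔ ∀ r ∈ N.annihilator, r • m = 0

/-- A secondary submodule: each `r : R` satisfies `r • N = N` or `r ^ t • N = ⊥`. -/
def IsSecondarySubmodule (N : Submodule R M) : Prop :=
  N ≠ ⊥ ∧ ∀ r : R, r • N = N ∨ ∃ t : ℕ, 0 < t ∧ r ^ t • N = ⊥

/-!
With `P = (L :_R sec N)` and `Q = (Ann N :_R a)`, the 2-absorbing property applied to `a` and each
`c ∈ I` shows that, unless `a ∈ P`, the ideal `I` is covered by `P ∪ Q`. An ideal contained in the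
union of two ideals lies in one of them, which gives `I • sec N ≤ L` or `I a ⊆ Ann N`.
-/

namespace Submodule

theorem smul_le_iff_le_colon {I : Ideal R} {N L : Submodule R M} : I • N ≤ L ↔ I ≤ L.colon N := by
  rw [smul_le]
  simp only [SetLike.le_def, mem_colon, SetLike.mem_coe]

theorem mem_annihilator_iff_pointwise_smul_eq_bot {N : Submodule R M} {r : R} :
    r ∈ N.annihilator ↔ r • N = ⊥ := by
  rw [← bot_colon, mem_colon_iff_le, le_bot_iff]

theorem mul_pointwise_smul_le_smul_smul {I : Ideal R} {N : Submodule R M} {c : R} (hc : c ∈ I)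
    (a : R) : (a * c) • N ≤ a • (I • N) := by
  rw [mul_smul]
  gcongr
  rintro _ ⟨n, hn, rfl⟩
  exact smul_mem_smul hc hn

end Submodule

open Submodule

theorem Is2AbsSecondary.mem_colon_or {N L : Submodule R M} (hN : Is2AbsSecondary N)
    (hL : CompletelyIrreducible L) {a b : R} (h : (a * b) • N ≤ L) :
    a ∈ L.colon (secRad N) ∨ b ∈ L.colon (secRad N) ∨ a * b ∈ N.annihilator := by
  simpa only [mem_colon_iff_le, mem_annihilator_iff_pointwise_smul_eq_bot] using hN.2 a b L hL h

theorem stmt0 (I : Ideal R) (N : Submodule R M) (hN : Is2AbsSecondary N)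
    (a : R) (L : Submodule R M) (hL : CompletelyIrreducible L)
    (h : a • (I • N) ≤ L) :
    a • secRad N ≤ L ∨ I • secRad N ≤ L ∨
      I * Ideal.span {a} ≤ Submodule.annihilator N := by
  rw [← mem_colon_iff_le, smul_le_iff_le_colon, ← Ideal.smul_eq_mul, smul_le_iff_le_colon]
  refine or_iff_not_imp_left.mpr fun ha => Ideal.subset_union.mp fun c hc => ?_
  rcases hN.mem_colon_or hL ((mul_pointwise_smul_le_smul_smul hc a).trans h) with hac | hc | hac
  · exact absurd hac ha
  · exact Or.inl hc
  · exact Or.inr (Ideal.mem_colon_span_singleton.mpr (by rwa [mul_comm]))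
end

section
/- Let $I, J$ be ideals of $R$, $N$ a 2-absorbing secondary submodule of an $R$-module $M$, and $L$ a completely irreducible submodule of $M$. If $IJN \subseteq L$, then $I\,\mathrm{sec}(N) \subseteq L$ or $J\,\mathrm{sec}(N) \subseteq L$ or $IJ \subseteq \mathrm{Ann}_R(N)$. -/
open Pointwise

variable {R : Type*} [CommRing R] {M : Type*} [AddCommGroup M] [Module R M]

/-!
The elementwise absorption property passes to ideals by a translation trick: if `a₀ ∈ I` lies
outside an additive subgroup `P`, then every `a ∈ I` is a difference of two elements of `I`
outside `P`, namely `a = (a + a₀) - a₀` when `a ∈ P`. Applying this in each factor of `a * b`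
turns "`a ∉ P` and `b ∉ Q` imply `a * b ∈ T`" into `I * J ≤ T`. For the theorem take
`P = Q = (L : sec N)` and `T = (0 : N) = Ann N`.
-/

theorem map_mem_of_map_mem_sdiff {G H S T : Type*} [AddGroup G] [AddGroup H]
    [SetLike S G] [AddSubgroupClass S G] [SetLike T H] [AddSubgroupClass T H]
    {I P : S} {K : T} (f : G →+ H) {x₀ : G} (hx₀I : x₀ ∈ I) (hx₀P : x₀ ∉ P)
    (hf : ∀ x ∈ I, x ∉ P → f x ∈ K) {x : G} (hxI : x ∈ I) : f x ∈ K := by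
  by_cases hxP : x ∈ P
  · have hshift : x + x₀ ∉ P := by rwa [add_mem_cancel_left hxP]
    have := sub_mem (hf _ (add_mem hxI hx₀I) hshift) (hf x₀ hx₀I hx₀P)
    rwa [← map_sub, add_sub_cancel_right] at this
  · exact hf x hxI hxP

theorem Ideal.le_or_le_or_mul_le {I J P Q T : Ideal R}
    (h : ∀ a ∈ I, ∀ b ∈ J, a ∈ P ∨ b ∈ Q ∨ a * b ∈ T) : I ≤ P ∨ J ≤ Q ∨ I * J ≤ T := by
  by_contra! ⟨hIP, hJQ, hIJ⟩
  obtain ⟨a₀, ha₀I, ha₀P⟩ := SetLike.not_le_iff_exists.mp hIP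
  obtain ⟨b₀, hb₀J, hb₀Q⟩ := SetLike.not_le_iff_exists.mp hJQ
  have outside : ∀ a ∈ I, a ∉ P → ∀ b ∈ J, b ∉ Q → a * b ∈ T := fun a ha haP b hb hbQ =>
    ((h a ha b hb).resolve_left haP).resolve_left hbQ
  have left_outside : ∀ a ∈ I, a ∉ P → ∀ b ∈ J, a * b ∈ T := fun a ha haP b hb =>
    map_mem_of_map_mem_sdiff (AddMonoidHom.mulLeft a) hb₀J hb₀Q (outside a ha haP) hb
  exact hIJ <| Ideal.mul_le.mpr fun a ha b hb =>
    map_mem_of_map_mem_sdiff (AddMonoidHom.mulRight b) ha₀I ha₀P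
      (fun a ha haP => left_outside a ha haP b hb) ha

theorem Submodule.smul_le_iff_le_colon_s1 {I : Ideal R} {P N : Submodule R M} :
    I • P ≤ N ↔ I ≤ N.colon P := by
  rw [smul_le]
  exact ⟨fun h r hr => mem_colon.mpr (h r hr), fun h r hr => mem_colon.mp (h hr)⟩

theorem stmt1 (I J : Ideal R) (N : Submodule R M) (hN : Is2AbsSecondary N)
    (L : Submodule R M) (hL : CompletelyIrreducible L)
    (h : I • (J • N) ≤ L) :
    I • secRad N ≤ L ∨ J • secRad N ≤ L ∨ I * J ≤ Submodule.annihilator N := by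
  rw [← Submodule.mul_smul, Submodule.smul_le_iff_le_colon_s1] at h
  simp only [Submodule.smul_le_iff_le_colon_s1, ← Submodule.bot_colon]
  refine Ideal.le_or_le_or_mul_le fun a ha b hb => ?_
  have hab : (a * b) • N ≤ L := Submodule.mem_colon_iff_le.mp (h (Ideal.mul_mem_mul ha hb))
  simpa only [Submodule.mem_colon_iff_le, le_bot_iff] using hN.2 a b L hL hab
end

section
/- Let $N$ be a nonzero submodule of an $R$-module $M$. Then the following are equivalent: (a) whenever $abN \subseteq L_1 \cap L_2$ for $a,b \in R$ and completely irreducible submodules $L_1, L_2$ of $M$, then $a\,\mathrm{sec}(N) \subseteq L_1 \cap L_2$ or $b\,\mathrm{sec}(N) \subseteq L_1 \cap L_2$ or $abN = 0$; (b) whenever $IJN \subseteq K$ for ideals $I,J$ of $R$ and a submodule $K$ of $M$, then $I\,\mathrm{sec}(N) \subseteq K$ or $J\,\mathrm{sec}(N) \subseteq K$ or $IJN = 0$; (c) for each $a,b \in R$, $a\,\mathrm{sec}(N) \subseteq abN$ or $b\,\mathrm{sec}(N) \subseteq abN$ or $abN = 0$. -/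
open Pointwise

variable {R : Type*} [CommRing R] {M : Type*} [AddCommGroup M] [Module R M]

/-
(b) ⇒ (a) and (b) ⇒ (c) are the special case of principal ideals. For (a) ⇒ (c), a submodule
is the intersection of the completely irreducible submodules containing it, so an element outside
`(a * b) • N` is already outside such an `L`. For (c) ⇒ (b), pass to colon ideals: with
`P = K : sec N` and `Q = Ann N`, every `a ∈ I`, `b ∈ J` satisfy `a ∈ P ∨ b ∈ P ∨ a * b ∈ Q`, and
since an ideal covered by two ideals lies in one of them, `I ⊄ P` and `J ⊄ P` force `I * J ≤ Q`.
-/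

theorem Submodule.le_colon_iff_smul_le {I : Ideal R} {K S : Submodule R M} :
    I ≤ K.colon S ↔ I • S ≤ K := by
  simp only [SetLike.le_def, mem_colon, SetLike.mem_coe]
  exact Submodule.smul_le.symm

theorem Ideal.mul_le_of_forall_mem_or_mem_or_mul_mem {I J P Q : Ideal R}
    (h : ∀ a ∈ I, ∀ b ∈ J, a ∈ P ∨ b ∈ P ∨ a * b ∈ Q) (hI : ¬I ≤ P) (hJ : ¬J ≤ P) :
    I * J ≤ Q := by
  have mul_mem_of_notMem : ∀ b ∈ J, b ∉ P → ∀ a ∈ I, a * b ∈ Q := by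
    intro b hb hbP
    have hcover : (I : Set R) ⊆ P ∪ Q.colon (span {b}) := fun a ha ↦ by
      rcases h a ha b hb with haP | hbP' | habQ
      · exact Or.inl haP
      · exact absurd hbP' hbP
      · exact Or.inr (mem_colon_span_singleton.mpr habQ)
    exact fun a ha ↦ mem_colon_span_singleton.mp ((subset_union.mp hcover).resolve_left hI ha)
  have hcover : (J : Set R) ⊆ P ∪ Q.colon (I : Set R) := fun b hb ↦ by
    by_cases hbP : b ∈ P
    · exact Or.inl hbP
    · exact Or.inr (Submodule.mem_colon.mpr fun a ha ↦ by
        simpa only [smul_eq_mul, mul_comm] using mul_mem_of_notMem b hb hbP a ha)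
  have hJQ := (subset_union.mp hcover).resolve_left hJ
  exact mul_le.mpr fun a ha b hb ↦ by
    simpa only [smul_eq_mul, mul_comm] using Submodule.mem_colon.mp (hJQ hb) a ha

theorem Submodule.exists_completelyIrreducible_le_notMem {K : Submodule R M} {x : M}
    (hx : x ∉ K) : ∃ L : Submodule R M, CompletelyIrreducible L ∧ K ≤ L ∧ x ∉ L := by
  have chain_bound : ∀ c ⊆ {P : Submodule R M | x ∉ P}, IsChain (· ≤ ·) c →
      ∀ P ∈ c, ∃ ub ∈ {P : Submodule R M | x ∉ P}, ∀ Q ∈ c, Q ≤ ub := by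
    intro c hc hchain P hP
    refine ⟨sSup c, fun hxc ↦ ?_, fun Q hQ ↦ le_sSup hQ⟩
    obtain ⟨Q, hQ, hxQ⟩ := (mem_sSup_of_directed ⟨P, hP⟩ hchain.directedOn).mp hxc
    exact hc hQ hxQ
  obtain ⟨L, hKL, hxL, hLmax⟩ := zorn_le_nonempty₀ _ chain_bound K hx
  refine ⟨L, ⟨fun hL ↦ hxL (hL ▸ mem_top), fun s hs ↦ ?_⟩, hKL, hxL⟩
  by_contra hLs
  -- every member of `s` strictly contains `L`, hence contains `x` by maximality
  have hxs : ∀ W ∈ s, x ∈ W := fun W hW ↦ by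
    have hLW : L ≤ W := hs ▸ sInf_le hW
    by_contra hxW
    exact hLs (le_antisymm hLW (hLmax hxW hLW) ▸ hW)
  exact hxL (hs ▸ mem_sInf.mpr hxs)

theorem Submodule.le_or_le_or_of_forall_completelyIrreducible {A B C : Submodule R M} {p : Prop}
    (h : ∀ L₁ L₂ : Submodule R M, CompletelyIrreducible L₁ → CompletelyIrreducible L₂ →
      C ≤ L₁ ⊓ L₂ → A ≤ L₁ ⊓ L₂ ∨ B ≤ L₁ ⊓ L₂ ∨ p) :
    A ≤ C ∨ B ≤ C ∨ p := by
  by_contra! ⟨hA, hB, hp⟩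
  obtain ⟨x, hxA, hxC⟩ := SetLike.not_le_iff_exists.mp hA
  obtain ⟨y, hyB, hyC⟩ := SetLike.not_le_iff_exists.mp hB
  obtain ⟨L₁, hL₁, hCL₁, hxL₁⟩ := exists_completelyIrreducible_le_notMem hxC
  obtain ⟨L₂, hL₂, hCL₂, hyL₂⟩ := exists_completelyIrreducible_le_notMem hyC
  rcases h L₁ L₂ hL₁ hL₂ (le_inf hCL₁ hCL₂) with hAL | hBL | hp'
  · exact hxL₁ (hAL hxA).1
  · exact hyL₂ (hBL hyB).2
  · exact hp hp'

theorem Submodule.span_singleton_smul_span_singleton_smul (a b : R) (N : Submodule R M) :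
    Ideal.span {a} • Ideal.span {b} • N = (a * b) • N := by
  rw [ideal_span_singleton_smul, ideal_span_singleton_smul, smul_smul]

section

variable {N S : Submodule R M}

theorem smul_le_or_of_forall_ideal_smul_le
    (h : ∀ (I J : Ideal R) (K : Submodule R M), I • J • N ≤ K →
      I • S ≤ K ∨ J • S ≤ K ∨ I • J • N = ⊥)
    (a b : R) {K : Submodule R M} (hK : (a * b) • N ≤ K) :
    a • S ≤ K ∨ b • S ≤ K ∨ (a * b) • N = ⊥ := by
  have := h (Ideal.span {a}) (Ideal.span {b}) K
    (by rwa [Submodule.span_singleton_smul_span_singleton_smul])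
  rwa [Submodule.span_singleton_smul_span_singleton_smul, Submodule.ideal_span_singleton_smul,
    Submodule.ideal_span_singleton_smul] at this

theorem ideal_smul_le_or_of_forall_smul_le
    (h : ∀ a b : R, a • S ≤ (a * b) • N ∨ b • S ≤ (a * b) • N ∨ (a * b) • N = ⊥)
    (I J : Ideal R) (K : Submodule R M) (hK : I • J • N ≤ K) :
    I • S ≤ K ∨ J • S ≤ K ∨ I • J • N = ⊥ := by
  by_cases hI : I • S ≤ K
  · exact Or.inl hI
  by_cases hJ : J • S ≤ K
  · exact Or.inr (Or.inl hJ)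
  refine Or.inr (Or.inr (eq_bot_iff.mpr ?_))
  rw [← Submodule.le_colon_iff_smul_le] at hI hJ
  rw [← Submodule.mul_smul, ← Submodule.le_colon_iff_smul_le]
  refine Ideal.mul_le_of_forall_mem_or_mem_or_mul_mem (fun a ha b hb ↦ ?_) hI hJ
  have habK : (a * b) • N ≤ K := calc
    (a * b) • N = Ideal.span {a * b} • N := (Submodule.ideal_span_singleton_smul _ _).symm
    _ ≤ (I * J) • N := Submodule.smul_mono_left
      ((Ideal.span_singleton_le_iff_mem _).mpr (Ideal.mul_mem_mul ha hb))
    _ ≤ K := Submodule.mul_smul I J N ▸ hK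
  simp only [Submodule.mem_colon_iff_le]
  rcases h a b with haS | hbS | hab
  · exact Or.inl (haS.trans habK)
  · exact Or.inr (Or.inl (hbS.trans habK))
  · exact Or.inr (Or.inr hab.le)

end

theorem stmt2_general (N : Submodule R M) :
    ((∀ (a b : R) (L₁ L₂ : Submodule R M),
        CompletelyIrreducible L₁ → CompletelyIrreducible L₂ →
        (a * b) • N ≤ L₁ ⊓ L₂ →
        a • secRad N ≤ L₁ ⊓ L₂ ∨ b • secRad N ≤ L₁ ⊓ L₂ ∨ (a * b) • N = ⊥) ↔
      (∀ (I J : Ideal R) (K : Submodule R M), I • (J • N) ≤ K →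
        I • secRad N ≤ K ∨ J • secRad N ≤ K ∨ I • (J • N) = ⊥)) ∧
    ((∀ (I J : Ideal R) (K : Submodule R M), I • (J • N) ≤ K →
        I • secRad N ≤ K ∨ J • secRad N ≤ K ∨ I • (J • N) = ⊥) ↔
      (∀ a b : R,
        a • secRad N ≤ (a * b) • N ∨ b • secRad N ≤ (a * b) • N ∨ (a * b) • N = ⊥)) :=
  ⟨⟨fun ha ↦ ideal_smul_le_or_of_forall_smul_le
      (fun a b ↦ Submodule.le_or_le_or_of_forall_completelyIrreducible (ha a b)),
    fun hb a b _ _ _ _ ↦ smul_le_or_of_forall_ideal_smul_le hb a b⟩,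
  ⟨fun hb a b ↦ smul_le_or_of_forall_ideal_smul_le hb a b le_rfl,
    ideal_smul_le_or_of_forall_smul_le⟩⟩

theorem stmt2 (N : Submodule R M) (hN : N ≠ ⊥) :
    ((∀ (a b : R) (L₁ L₂ : Submodule R M),
        CompletelyIrreducible L₁ → CompletelyIrreducible L₂ →
        (a * b) • N ≤ L₁ ⊓ L₂ →
        a • secRad N ≤ L₁ ⊓ L₂ ∨ b • secRad N ≤ L₁ ⊓ L₂ ∨ (a * b) • N = ⊥) ↔
      (∀ (I J : Ideal R) (K : Submodule R M), I • (J • N) ≤ K →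
        I • secRad N ≤ K ∨ J • secRad N ≤ K ∨ I • (J • N) = ⊥)) ∧
    ((∀ (I J : Ideal R) (K : Submodule R M), I • (J • N) ≤ K →
        I • secRad N ≤ K ∨ J • secRad N ≤ K ∨ I • (J • N) = ⊥) ↔
      (∀ a b : R,
        a • secRad N ≤ (a * b) • N ∨ b • secRad N ≤ (a * b) • N ∨ (a * b) • N = ⊥)) :=
  stmt2_general N
end

section
/- The submodule $N = \langle 1/p^3 + \mathbb{Z} \rangle$ of the $\mathbb{Z}$-module $\mathbb{Z}_{p^\infty}$ (the Prüfer $p$-group) is a strongly 2-absorbing secondary submodule of $\mathbb{Z}_{p^\infty}$ but is not a strongly 2-absorbing second submodule. -/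
open Pointwise

variable {R : Type*} [CommRing R] {M : Type*} [AddCommGroup M] [Module R M]

/-!
Let `x` have order `p ^ (n + 1)` and `N = ℤ ∙ x`. Every nonzero element of `N` generates a
submodule containing the socle `ℤ ∙ p ^ n • x` (a gcd argument), and every second submodule of
`N` is killed by `p`, hence lies in the socle. So if `(a * b) • N ≠ 0` and `(a * b) • N ≤ K`,
then `K` contains the socle and therefore `sec N`. For `n = 2`, `K = p² • N` is killed by `p`
while `p • x` is not, so `p • N ≤ K` fails and `N` is not strongly 2-absorbing second.
-/

open Submodule

section PrimePowerOrder

variable {G : Type*} [AddCommGroup G] {x : G}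

lemma smul_span_singleton_int (a : ℤ) (x : G) : a • span ℤ {x} = span ℤ {a • x} := by
  rw [smul_span, Set.smul_set_singleton]

lemma gcd_zsmul_mem_span_zsmul (m : ℤ) {k : ℤ} (hk : k • x = 0) :
    (m.gcd k : ℤ) • x ∈ span ℤ {m • x} := by
  rw [Int.gcd_eq_gcd_ab, add_zsmul, mul_zsmul', mul_zsmul', hk, smul_zero, add_zero]
  exact smul_mem _ _ (mem_span_singleton_self _)

lemma Int.gcd_dvd_prime_pow_of_not_dvd {p n : ℕ} (hp : p.Prime) {m : ℤ}
    (hm : ¬ (p : ℤ) ^ (n + 1) ∣ m) : (m.gcd ((p : ℤ) ^ (n + 1)) : ℤ) ∣ (p : ℤ) ^ n := by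
  have hdvd : m.gcd ((p : ℤ) ^ (n + 1)) ∣ p ^ (n + 1) := by
    simpa [Int.natAbs_pow] using Int.gcd_dvd_natAbs_right m ((p : ℤ) ^ (n + 1))
  obtain ⟨j, hj, hg⟩ := (Nat.dvd_prime_pow hp).1 hdvd
  have hgm := Int.gcd_dvd_left m ((p : ℤ) ^ (n + 1))
  rw [hg] at hgm ⊢
  push_cast at hgm ⊢
  rcases hj.lt_or_eq with hj | rfl
  · exact pow_dvd_pow _ (Nat.lt_succ_iff.1 hj)
  · exact absurd hgm hm

variable {p n : ℕ}

lemma zsmul_eq_zero_iff_of_addOrderOf_eq (hx : addOrderOf x = p ^ n) {m : ℤ} :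
    m • x = 0 ↔ (p : ℤ) ^ n ∣ m := by
  rw [← addOrderOf_dvd_iff_zsmul_eq_zero, hx]
  norm_cast

lemma prime_pow_zsmul_ne_zero (hp : p.Prime) (hx : addOrderOf x = p ^ (n + 1)) {k : ℕ}
    (hk : k ≤ n) : (p : ℤ) ^ k • x ≠ 0 := by
  have hp' := Nat.prime_iff_prime_int.1 hp
  rw [Ne, zsmul_eq_zero_iff_of_addOrderOf_eq hx, pow_dvd_pow_iff hp'.ne_zero hp'.not_isUnit]
  omega

lemma prime_pow_zsmul_mem_span_of_mem_span (hp : p.Prime) (hx : addOrderOf x = p ^ (n + 1))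
    {y : G} (hy : y ∈ span ℤ {x}) (hy0 : y ≠ 0) : (p : ℤ) ^ n • x ∈ span ℤ {y} := by
  obtain ⟨m, rfl⟩ := mem_span_singleton.1 hy
  have hm : ¬ (p : ℤ) ^ (n + 1) ∣ m := (zsmul_eq_zero_iff_of_addOrderOf_eq hx).not.1 hy0
  obtain ⟨c, hc⟩ := Int.gcd_dvd_prime_pow_of_not_dvd hp hm
  rw [hc, mul_comm, mul_zsmul]
  exact smul_mem _ c
    (gcd_zsmul_mem_span_zsmul m ((zsmul_eq_zero_iff_of_addOrderOf_eq hx).2 dvd_rfl))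

lemma mem_span_prime_pow_zsmul_of_prime_zsmul_eq_zero (hp : p.Prime)
    (hx : addOrderOf x = p ^ (n + 1)) {z : G} (hz : z ∈ span ℤ {x}) (hpz : (p : ℤ) • z = 0) :
    z ∈ span ℤ {(p : ℤ) ^ n • x} := by
  obtain ⟨c, rfl⟩ := mem_span_singleton.1 hz
  rw [smul_smul, zsmul_eq_zero_iff_of_addOrderOf_eq hx, pow_succ',
    mul_dvd_mul_iff_left (Int.natCast_ne_zero.2 hp.ne_zero)] at hpz
  obtain ⟨d, rfl⟩ := hpz
  exact mem_span_singleton.2 ⟨d, by rw [smul_smul, mul_comm]⟩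

lemma secRad_span_le_span_prime_pow_zsmul (hp : p.Prime) (hx : addOrderOf x = p ^ (n + 1)) :
    secRad (span ℤ {x}) ≤ span ℤ {(p : ℤ) ^ n • x} := by
  refine sSup_le ?_
  rintro S ⟨⟨hS0, hSsec⟩, hSx⟩
  rcases hSsec p with hpS | hpS
  · refine absurd (eq_bot_iff.2 ?_) hS0
    have hpow : (p : ℤ) ^ (n + 1) • S = S :=
      pow_mem (show (p : ℤ) ∈ MulAction.stabilizerSubmonoid ℤ S from hpS) _
    calc S = (p : ℤ) ^ (n + 1) • S := hpow.symm
      _ ≤ (p : ℤ) ^ (n + 1) • span ℤ {x} := smul_mono_right _ hSx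
      _ = ⊥ := by
        rw [smul_span_singleton_int, (zsmul_eq_zero_iff_of_addOrderOf_eq hx).2 dvd_rfl,
          span_zero_singleton]
  · intro z hz
    have hpz : (p : ℤ) • z ∈ (p : ℤ) • S := smul_mem_pointwise_smul z _ S hz
    rw [hpS, mem_bot] at hpz
    exact mem_span_prime_pow_zsmul_of_prime_zsmul_eq_zero hp hx (hSx hz) hpz

theorem isS2AbsSecondary_span_of_addOrderOf_eq (hp : p.Prime)
    (hx : addOrderOf x = p ^ (n + 1)) : IsS2AbsSecondary (span ℤ {x}) := by
  refine ⟨?_, fun a b K hK => ?_⟩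
  · rw [Ne, span_singleton_eq_bot]
    simpa using prime_pow_zsmul_ne_zero hp hx (Nat.zero_le n)
  by_cases hab : (a * b) • x = 0
  · right; right
    rw [smul_span_singleton_int, hab, span_zero_singleton]
  · left
    rw [smul_span_singleton_int] at hK
    have hsoc : span ℤ {(p : ℤ) ^ n • x} ≤ K := span_le.2 <| Set.singleton_subset_iff.2 <|
      hK (prime_pow_zsmul_mem_span_of_mem_span hp hx
        (smul_mem _ _ (mem_span_singleton_self x)) hab)
    exact (smul_le_self_of_tower a _).trans
      ((secRad_span_le_span_prime_pow_zsmul hp hx).trans hsoc)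

theorem not_isS2AbsSecond_span_of_addOrderOf_eq (hp : p.Prime) (hx : addOrderOf x = p ^ 3) :
    ¬ IsS2AbsSecond (span ℤ {x}) := by
  rintro ⟨-, h⟩
  have hp2 : (p : ℤ) ^ 2 • x ≠ 0 := prime_pow_zsmul_ne_zero hp hx le_rfl
  have hpN : ¬ (p : ℤ) • span ℤ {x} ≤ span ℤ {(p : ℤ) ^ 2 • x} := fun hle => hp2 <| by
    have hpK : (p : ℤ) • span ℤ {(p : ℤ) ^ 2 • x} = ⊥ := by
      rw [smul_span_singleton_int, smul_smul, ← pow_succ',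
        (zsmul_eq_zero_iff_of_addOrderOf_eq hx).2 dvd_rfl, span_zero_singleton]
    have hpx := hle (smul_mem_pointwise_smul x _ _ (mem_span_singleton_self x))
    have hppx := smul_mem_pointwise_smul _ (p : ℤ) _ hpx
    rwa [hpK, mem_bot, smul_smul, ← sq] at hppx
  have hppN : ((p : ℤ) * p) • span ℤ {x} = span ℤ {(p : ℤ) ^ 2 • x} := by
    rw [smul_span_singleton_int, sq]
  rcases h p p _ hppN.le with hle | hle | hbot
  · exact hpN hle
  · exact hpN hle
  · exact hp2 (span_singleton_eq_bot.1 (hppN ▸ hbot))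

end PrimePowerOrder

lemma addOrderOf_mk_natCast_inv {n : ℕ} (hn : 0 < n) :
    addOrderOf (Submodule.Quotient.mk (n : ℚ)⁻¹ : ℚ ⧸ span ℤ ({1} : Set ℚ)) = n := by
  rw [addOrderOf_eq_iff hn]
  refine ⟨?_, fun m hmn hm0 => ?_⟩
  · rw [← Quotient.mk_smul, Quotient.mk_eq_zero, nsmul_eq_mul,
      mul_inv_cancel₀ (by positivity)]
    exact mem_span_singleton_self 1
  · rw [← Quotient.mk_smul, Ne, Quotient.mk_eq_zero, mem_span_singleton]
    rintro ⟨a, ha⟩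
    rw [zsmul_eq_mul, mul_one, nsmul_eq_mul] at ha
    have h0 : (0 : ℚ) < a := by rw [ha]; positivity
    have h1 : (a : ℚ) < 1 := by
      rw [ha, ← div_eq_mul_inv, div_lt_one (by positivity)]
      exact_mod_cast hmn
    have ha01 : (0 : ℤ) < a ∧ a < 1 := ⟨by exact_mod_cast h0, by exact_mod_cast h1⟩
    omega

theorem stmt4 (p : ℕ) (hp : p.Prime)
    (x : Submodule.torsion' ℤ (ℚ ⧸ Submodule.span ℤ ({1} : Set ℚ))
      (Submonoid.powers (p : ℤ)))
    (hx : (x : ℚ ⧸ Submodule.span ℤ ({1} : Set ℚ)) =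
      Submodule.Quotient.mk (((p : ℚ) ^ 3)⁻¹)) :
    IsS2AbsSecondary (Submodule.span ℤ {x}) ∧
      ¬ IsS2AbsSecond (Submodule.span ℤ {x}) := by
  have hord : addOrderOf x = p ^ 3 := by
    rw [← addOrderOf_addSubmonoid x, hx,
      ← addOrderOf_mk_natCast_inv (pow_pos hp.pos 3)]
    push_cast
    rfl
  exact ⟨isS2AbsSecondary_span_of_addOrderOf_eq hp hord,
    not_isS2AbsSecond_span_of_addOrderOf_eq hp hord⟩
end

section
/- Let $M$ be a finitely generated comultiplication $R$-module. If $N$ is a strongly 2-absorbing secondary submodule of $M$, then $\mathrm{Ann}_R(N)$ is a 2-absorbing primary ideal of $R$. -/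
open Pointwise

variable {R : Type*} [CommRing R] {M : Type*} [AddCommGroup M] [Module R M]

/-!
If `abc` annihilates `N`, then `(ab) • N` lies in the kernel `(0 :_M c)` of multiplication by
`c`, so the strongly 2-absorbing property puts `ab` in `Ann N`, or `ac` or `bc` in `Ann (sec N)`.
It remains to see `Ann (sec N) ⊆ √(Ann N)`. For every prime `p ⊇ Ann N`, comultiplication makes
`(0 :_M p)` a second submodule of `N` with annihilator exactly `p`; the inclusion
`Ann (0 :_M p) ⊆ p` comes from a single element `x` with `Ann x ⊆ p`, which exists because `M`
is finitely generated and `p` lies in its support.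
-/

open Submodule

namespace Submodule

lemma pointwise_smul_le_iff {a : R} {N K : Submodule R M} :
    a • N ≤ K ↔ ∀ n ∈ N, a • n ∈ K := by
  rw [← SetLike.coe_subset_coe, coe_pointwise_smul, Set.smul_set_subset_iff]
  rfl

lemma pointwise_smul_le_torsionBy_iff {a c : R} {N : Submodule R M} :
    a • N ≤ torsionBy R M c ↔ a * c ∈ N.annihilator := by
  simp only [pointwise_smul_le_iff, mem_torsionBy_iff, mem_annihilator, mul_smul, smul_comm c]

lemma pointwise_smul_eq_bot_iff {a : R} {N : Submodule R M} :
    a • N = ⊥ ↔ a ∈ N.annihilator := by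
  simp only [eq_bot_iff, pointwise_smul_le_iff, mem_bot, mem_annihilator]

lemma le_annihilator_torsionBySet (I : Ideal R) : I ≤ (torsionBySet R M I).annihilator :=
  fun a ha => mem_annihilator.mpr fun _ hm => (mem_torsionBySet_iff _ _).mp hm ⟨a, ha⟩

end Submodule

lemma IsSecond.le_secRad {S N : Submodule R M} (hS : IsSecond S) (hSN : S ≤ N) : S ≤ secRad N :=
  le_sSup ⟨hS, hSN⟩

namespace IsComultiplication

variable (hM : IsComultiplication R M)
include hM

lemma torsionBySet_annihilator (N : Submodule R M) : torsionBySet R M N.annihilator = N := by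
  ext m
  rw [hM N m, mem_torsionBySet_iff, Subtype.forall]
  rfl

lemma annihilator_torsionBySet_le_sup (I : Ideal R) (x : M) :
    (torsionBySet R M I).annihilator ≤ I ⊔ (R ∙ x).annihilator := by
  intro u hu
  have hux : u • x ∈ I • (R ∙ x) := by
    rw [← hM.torsionBySet_annihilator (I • (R ∙ x)), mem_torsionBySet_iff]
    rintro ⟨t, ht⟩
    have htx : t • x ∈ torsionBySet R M I := by
      refine (mem_torsionBySet_iff _ _).mpr fun ⟨a, ha⟩ => ?_
      rw [smul_comm]
      exact mem_annihilator.mp ht _ (smul_mem_smul ha (mem_span_singleton_self x))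
    rw [smul_comm]
    exact mem_annihilator.mp hu _ htx
  obtain ⟨a, ha, hax⟩ := mem_smul_span_singleton.mp hux
  refine mem_sup.mpr ⟨a, ha, u - a, ?_, add_sub_cancel a u⟩
  rw [mem_annihilator_span_singleton, sub_smul, hax, sub_self]

lemma annihilator_torsionBySet_of_isPrime [Module.Finite R M] {p : Ideal R} [hp : p.IsPrime]
    (hpM : Module.annihilator R M ≤ p) : (torsionBySet R M p).annihilator = p := by
  obtain ⟨x, hx⟩ := Module.mem_support_iff_exists_annihilator.mp
    ((Module.mem_support_iff_of_finite (p := ⟨p, hp⟩)).mpr hpM)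
  exact le_antisymm ((hM.annihilator_torsionBySet_le_sup p x).trans (sup_le le_rfl hx))
    (le_annihilator_torsionBySet p)

lemma isSecond_of_isPrime_annihilator {S : Submodule R M} (hS : S.annihilator.IsPrime) :
    IsSecond S := by
  refine ⟨fun h => hS.ne_top (annihilator_eq_top_iff.mpr h), fun a => ?_⟩
  by_cases ha : a ∈ S.annihilator
  · exact Or.inr (pointwise_smul_eq_bot_iff.mpr ha)
  refine Or.inl (le_antisymm (pointwise_smul_le_iff.mpr fun n hn => S.smul_mem a hn) ?_)
  intro m hm
  rw [← hM.torsionBySet_annihilator (a • S), mem_torsionBySet_iff]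
  rintro ⟨t, ht⟩
  have hta : t * a ∈ S.annihilator := by
    rw [← pointwise_smul_eq_bot_iff, mul_smul, pointwise_smul_eq_bot_iff.mpr ht]
  exact mem_annihilator.mp ((hS.mem_or_mem hta).resolve_right ha) m hm

lemma annihilator_secRad_le_radical [Module.Finite R M] (N : Submodule R M) :
    (secRad N).annihilator ≤ N.annihilator.radical := by
  rw [Ideal.radical_eq_sInf]
  refine le_sInf fun p ⟨hNp, hp⟩ => ?_
  have hpM : Module.annihilator R M ≤ p :=
    annihilator_top.symm.trans_le ((annihilator_mono le_top).trans hNp)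
  have hT : (torsionBySet R M p).annihilator = p := hM.annihilator_torsionBySet_of_isPrime hpM
  have hTN : torsionBySet R M p ≤ N :=
    hM.torsionBySet_annihilator N ▸ torsionBySet_le_torsionBySet_of_subset hNp
  have hTsec : IsSecond (torsionBySet R M p) := hM.isSecond_of_isPrime_annihilator (by rwa [hT])
  exact (annihilator_mono (hTsec.le_secRad hTN)).trans hT.le

end IsComultiplication

theorem stmt5 [Module.Finite R M] (hM : IsComultiplication R M)
    (N : Submodule R M) (hN : IsS2AbsSecondary N) :
    Is2AbsPrimaryIdeal (Submodule.annihilator N) := by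
  obtain ⟨hN0, hNabs⟩ := hN
  refine ⟨mt annihilator_eq_top_iff.mp hN0, fun a b c habc => ?_⟩
  have hrad := hM.annihilator_secRad_le_radical N
  rcases hNabs a b (torsionBy R M c) (pointwise_smul_le_torsionBy_iff.mpr habc) with ha | hb | hab
  · exact .inr <| .inl <| hrad (pointwise_smul_le_torsionBy_iff.mp ha)
  · exact .inr <| .inr <| hrad (pointwise_smul_le_torsionBy_iff.mp hb)
  · exact .inl (pointwise_smul_eq_bot_iff.mp hab)
end

section
/- Let $N$ be a submodule of an $R$-module $M$ such that $\mathrm{sec}(N)$ is a second submodule of $M$. Then $N$ is a strongly 2-absorbing secondary submodule of $M$. -/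
open Pointwise

variable {R : Type*} [CommRing R] {M : Type*} [AddCommGroup M] [Module R M]

theorem secRad_le (N : Submodule R M) : secRad N ≤ N :=
  sSup_le fun _ hS => hS.2

theorem IsSecond.smul_le_or_smul_le {S N K : Submodule R M} (hS : IsSecond S) (hSN : S ≤ N)
    {a b : R} (habK : (a * b) • N ≤ K) : a • S ≤ K ∨ b • S ≤ K := by
  rcases hS.2 a with ha | ha
  · rcases hS.2 b with hb | hb
    · left
      calc a • S = (a * b) • S := by rw [mul_smul, hb, ha]
        _ ≤ (a * b) • N := smul_mono_right _ hSN
        _ ≤ K := habK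
    · exact Or.inr (hb ▸ bot_le)
  · exact Or.inl (ha ▸ bot_le)

theorem stmt10 (N : Submodule R M) (h : IsSecond (secRad N)) :
    IsS2AbsSecondary N :=
  ⟨ne_bot_of_le_ne_bot h.1 (secRad_le N), fun _ _ _ habK =>
    (h.smul_le_or_smul_le (secRad_le N) habK).imp_right Or.inl⟩
end

section
/- Let $M$ be a comultiplication $R$-module and let $N_1, N_2$ be secondary submodules of $M$. Then $N_1 + N_2$ is a strongly 2-absorbing secondary submodule of $M$. -/
open Pointwise

variable {R : Type*} [CommRing R] {M : Type*} [AddCommGroup M] [Module R M]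

section Helpers

lemma mem_psmul {a : R} {S : Submodule R M} {x : M} :
    x ∈ a • S ↔ ∃ y ∈ S, a • y = x := by
  rw [← SetLike.mem_coe, Submodule.coe_pointwise_smul]
  exact Set.mem_smul_set

lemma psmul_le_iff {a : R} {S K : Submodule R M} :
    a • S ≤ K ↔ ∀ x ∈ S, a • x ∈ K := by
  constructor
  · intro h x hx; exact h (Submodule.smul_mem_pointwise_smul x a S hx)
  · intro h y hy; rcases mem_psmul.mp hy with ⟨x, hx, rfl⟩; exact h x hx

lemma psmul_eq_bot_iff {a : R} {S : Submodule R M} :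
    a • S = ⊥ ↔ ∀ x ∈ S, a • x = 0 := by
  rw [eq_bot_iff, psmul_le_iff]
  simp [Submodule.mem_bot]

lemma pow_psmul {a : R} {S : Submodule R M} (h : a • S = S) (n : ℕ) : a ^ n • S = S := by
  induction n with
  | zero => simp
  | succ n ih => rw [pow_succ, mul_smul, h, ih]

lemma second_killed {S N : Submodule R M} (hS : IsSecond S) (hSN : S ≤ N) {r : R}
    (hr : r ∈ N.annihilator.radical) {x : M} (hx : x ∈ S) : r • x = 0 := by
  rcases hr with ⟨n, hn⟩
  rcases hS.2 r with h | h
  · exfalso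
    apply hS.1
    have hpow : r ^ n • S = S := pow_psmul h n
    rw [eq_bot_iff, ← hpow, psmul_le_iff]
    intro y hy
    simp [Submodule.mem_annihilator.mp hn y (hSN hy)]
  · exact psmul_eq_bot_iff.mp h x hx

lemma secondary_primary {N : Submodule R M} (h : IsSecondarySubmodule N) {x y : R}
    (hxy : x * y ∈ N.annihilator) : x ∈ N.annihilator ∨ y ∈ N.annihilator.radical := by
  rcases h.2 y with hy | ⟨t, _ht, hty⟩
  · left
    rw [Submodule.mem_annihilator]
    intro n hn
    rw [← hy] at hn
    rcases mem_psmul.mp hn with ⟨m, hm, rfl⟩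
    calc x • y • m = (x * y) • m := (mul_smul x y m).symm
      _ = 0 := Submodule.mem_annihilator.mp hxy m hm
  · right
    exact ⟨t, Submodule.mem_annihilator.mpr (psmul_eq_bot_iff.mp hty)⟩

lemma primary_radical_prime {P : Ideal R}
    (h : ∀ x y : R, x * y ∈ P → x ∈ P ∨ y ∈ P.radical) {x y : R}
    (hxy : x * y ∈ P.radical) : x ∈ P.radical ∨ y ∈ P.radical := by
  rcases hxy with ⟨n, hn⟩
  rw [mul_pow] at hn
  rcases h _ _ hn with hx | hy
  · exact Or.inl ⟨n, hx⟩
  · rcases hy with ⟨m, hm⟩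
    exact Or.inr ⟨n * m, by rwa [pow_mul]⟩

lemma smul_secRad_le (hM : IsComultiplication R M) {N K : Submodule R M} {a : R}
    (hA : ∀ c ∈ K.annihilator, a * c ∈ N.annihilator.radical) :
    a • secRad N ≤ K := by
  rw [psmul_le_iff]
  intro x hx
  suffices h : secRad N ≤ K.comap (DistribMulAction.toLinearMap R M a) from h hx
  unfold secRad
  apply sSup_le
  rintro S ⟨hS, hSN⟩ s hs
  simp only [Submodule.mem_comap, DistribSMul.toLinearMap_apply]
  apply (hM K (a • s)).mpr
  intro c hc
  calc c • a • s = (a * c) • s := by rw [← mul_smul, mul_comm]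
    _ = 0 := second_killed hS hSN (hA c hc) hs

end Helpers

theorem stmt12 (hM : IsComultiplication R M) (N₁ N₂ : Submodule R M)
    (h₁ : IsSecondarySubmodule N₁) (h₂ : IsSecondarySubmodule N₂) :
    IsS2AbsSecondary (N₁ ⊔ N₂) := by
  refine ⟨?_, ?_⟩
  · intro hbot
    exact h₁.1 (le_bot_iff.mp (le_sup_left.trans hbot.le))
  intro a b K hK
  by_cases hab : (a * b) • (N₁ ⊔ N₂) = ⊥
  · exact Or.inr (Or.inr hab)
  have hann : (N₁ ⊔ N₂).annihilator = N₁.annihilator ⊓ N₂.annihilator := by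
    apply le_antisymm
    · exact le_inf (Submodule.annihilator_mono le_sup_left)
        (Submodule.annihilator_mono le_sup_right)
    · intro r hr
      rw [Submodule.mem_annihilator]
      intro n hn
      rcases Submodule.mem_sup.mp hn with ⟨y, hy, z, hz, rfl⟩
      rw [smul_add, Submodule.mem_annihilator.mp hr.1 y hy,
        Submodule.mem_annihilator.mp hr.2 z hz, add_zero]
  have step1 : ∀ c ∈ K.annihilator, a * b * c ∈ (N₁ ⊔ N₂).annihilator := by
    intro c hc
    rw [Submodule.mem_annihilator]
    intro n hn
    have h1 : (a * b) • n ∈ K := hK (Submodule.smul_mem_pointwise_smul n _ _ hn)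
    calc (a * b * c) • n = c • ((a * b) • n) := by rw [← mul_smul, mul_comm c (a * b)]
      _ = 0 := Submodule.mem_annihilator.mp hc _ h1
  have habI : a * b ∉ (N₁ ⊔ N₂).annihilator := fun h =>
    hab (psmul_eq_bot_iff.mpr (Submodule.mem_annihilator.mp h))
  have hp₁ : ∀ x y : R, x * y ∈ N₁.annihilator →
      x ∈ N₁.annihilator ∨ y ∈ N₁.annihilator.radical := fun x y hxy => secondary_primary h₁ hxy
  have hp₂ : ∀ x y : R, x * y ∈ N₂.annihilator →
      x ∈ N₂.annihilator ∨ y ∈ N₂.annihilator.radical := fun x y hxy => secondary_primary h₂ hxy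
  have key : ∀ c ∈ K.annihilator,
      a * c ∈ (N₁ ⊔ N₂).annihilator.radical ∨ b * c ∈ (N₁ ⊔ N₂).annihilator.radical := by
    intro c hc
    have habc := step1 c hc
    rw [hann] at habc
    rw [hann] at habI
    rw [hann, Ideal.radical_inf]
    rcases hp₁ (a * b) c habc.1 with hab1 | hc1 <;>
      rcases hp₂ (a * b) c habc.2 with hab2 | hc2
    · exact absurd ⟨hab1, hab2⟩ habI
    · rcases primary_radical_prime hp₁ (Ideal.le_radical hab1) with ha | hb
      · exact Or.inl ⟨Ideal.mul_mem_right c _ ha, Ideal.mul_mem_left _ a hc2⟩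
      · exact Or.inr ⟨Ideal.mul_mem_right c _ hb, Ideal.mul_mem_left _ b hc2⟩
    · rcases primary_radical_prime hp₂ (Ideal.le_radical hab2) with ha | hb
      · exact Or.inl ⟨Ideal.mul_mem_left _ a hc1, Ideal.mul_mem_right c _ ha⟩
      · exact Or.inr ⟨Ideal.mul_mem_left _ b hc1, Ideal.mul_mem_right c _ hb⟩
    · exact Or.inl ⟨Ideal.mul_mem_left _ a hc1, Ideal.mul_mem_left _ a hc2⟩
  by_cases hA : ∀ c ∈ K.annihilator, a * c ∈ (N₁ ⊔ N₂).annihilator.radical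
  · exact Or.inl (smul_secRad_le hM hA)
  · push_neg at hA
    obtain ⟨c₁, hc₁, hac₁⟩ := hA
    have hbc₁ : b * c₁ ∈ (N₁ ⊔ N₂).annihilator.radical := (key c₁ hc₁).resolve_left hac₁
    have hB : ∀ c ∈ K.annihilator, b * c ∈ (N₁ ⊔ N₂).annihilator.radical := by
      intro c hc
      by_cases hbc : b * c ∈ (N₁ ⊔ N₂).annihilator.radical
      · exact hbc
      · have hac : a * c ∈ (N₁ ⊔ N₂).annihilator.radical := (key c hc).resolve_right hbc
        have hcc : c + c₁ ∈ K.annihilator := add_mem hc hc₁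
        rcases key _ hcc with h' | h'
        · exfalso
          apply hac₁
          have heq : a * c₁ = a * (c + c₁) - a * c := by ring
          rw [heq]
          exact sub_mem h' hac
        · have heq : b * c = b * (c + c₁) - b * c₁ := by ring
          rw [heq]
          exact sub_mem h' hbc₁
    exact Or.inr (Or.inl (smul_secRad_le hM hB))
end

section
/- Let $f : M \to M'$ be an injective homomorphism of $R$-modules and $N$ a submodule of $M$. Then $\mathrm{sec}(f(N)) = f(\mathrm{sec}(N))$. -/
open Pointwise

variable {R : Type*} [CommRing R] {M : Type*} [AddCommGroup M] [Module R M]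

section Map

variable {M' : Type*} [AddCommGroup M'] [Module R M'] {f : M →ₗ[R] M'}

theorem isSecond_map_iff (hf : Function.Injective f) {S : Submodule R M} :
    IsSecond (S.map f) ↔ IsSecond S := by
  have hmap := Submodule.map_injective_of_injective hf
  simp only [IsSecond, ← Submodule.map_pointwise_smul, ← Submodule.map_bot f, hmap.ne_iff,
    hmap.eq_iff]

theorem setOf_isSecond_le_map (hf : Function.Injective f) (N : Submodule R M) :
    {S' : Submodule R M' | IsSecond S' ∧ S' ≤ N.map f} =
      Submodule.map f '' {S | IsSecond S ∧ S ≤ N} := by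
  ext S'
  constructor
  · rintro ⟨hS', hle⟩
    have hS'_eq : (S'.comap f).map f = S' :=
      Submodule.map_comap_eq_of_le (hle.trans LinearMap.map_le_range)
    refine ⟨S'.comap f, ⟨?_, ?_⟩, hS'_eq⟩
    · rwa [← isSecond_map_iff hf, hS'_eq]
    · rwa [← Submodule.map_le_map_iff_of_injective hf, hS'_eq]
  · rintro ⟨S, ⟨hS, hle⟩, rfl⟩
    exact ⟨(isSecond_map_iff hf).2 hS, Submodule.map_mono hle⟩

end Map

theorem stmt13 {M' : Type*} [AddCommGroup M'] [Module R M']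
    (f : M →ₗ[R] M') (hf : Function.Injective f) (N : Submodule R M) :
    secRad (N.map f) = (secRad N).map f := by
  rw [secRad, secRad, setOf_isSecond_le_map hf, sSup_image, (Submodule.gc_map_comap f).l_sSup]
end

section
/- Let $f : M \to M'$ be an injective homomorphism of $R$-modules. If $N$ is a strongly 2-absorbing secondary submodule of $M$, then $f(N)$ is a strongly 2-absorbing secondary submodule of $M'$. Conversely, if $N'$ is a strongly 2-absorbing secondary submodule of $M'$ with $N' \subseteq f(M)$, then $f^{-1}(N')$ is a strongly 2-absorbing secondary submodule of $M$. -/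
open Pointwise

variable {R : Type*} [CommRing R] {M : Type*} [AddCommGroup M] [Module R M]

/- Enlarging `K` only weakens the hypothesis `(a * b) • N ≤ K` and the first two alternatives,
so it suffices to test `K = (a * b) • N`. -/
lemma isS2AbsSecondary_iff {N : Submodule R M} :
    IsS2AbsSecondary N ↔ N ≠ ⊥ ∧ ∀ a b : R,
      a • secRad N ≤ (a * b) • N ∨ b • secRad N ≤ (a * b) • N ∨ (a * b) • N = ⊥ := by
  refine and_congr_right fun _ => forall₂_congr fun _ _ => ⟨fun h => h _ le_rfl, ?_⟩
  rintro (ha | hb | hab) K hK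
  · exact Or.inl (ha.trans hK)
  · exact Or.inr (Or.inl (hb.trans hK))
  · exact Or.inr (Or.inr hab)

namespace Submodule

variable {M' : Type*} [AddCommGroup M'] [Module R M'] {f : M →ₗ[R] M'}

lemma map_eq_bot_iff_of_injective (hf : Function.Injective f) {p : Submodule R M} :
    p.map f = ⊥ ↔ p = ⊥ :=
  (map_injective_of_injective hf).eq_iff' (map_bot f)

lemma isSecond_map_iff (hf : Function.Injective f) {S : Submodule R M} :
    IsSecond (S.map f) ↔ IsSecond S := by
  simp only [IsSecond, ne_eq, ← map_pointwise_smul, (map_injective_of_injective hf).eq_iff,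
    map_eq_bot_iff_of_injective hf]

lemma image_map_setOf_isSecond_le (hf : Function.Injective f) (N : Submodule R M) :
    map f '' {S | IsSecond S ∧ S ≤ N} = {S | IsSecond S ∧ S ≤ N.map f} := by
  ext S
  constructor
  · rintro ⟨T, ⟨hT, hTN⟩, rfl⟩
    exact ⟨(isSecond_map_iff hf).2 hT, map_mono hTN⟩
  · rintro ⟨hS, hSN⟩
    have hS_eq : (S.comap f).map f = S := map_comap_eq_of_le (hSN.trans LinearMap.map_le_range)
    refine ⟨S.comap f, ⟨?_, ?_⟩, hS_eq⟩
    · rwa [← isSecond_map_iff hf, hS_eq]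
    · rwa [← map_le_map_iff_of_injective hf, hS_eq]

lemma secRad_map (hf : Function.Injective f) (N : Submodule R M) :
    secRad (N.map f) = (secRad N).map f := by
  rw [secRad, secRad, ← image_map_setOf_isSecond_le hf, sSup_image, (gc_map_comap f).l_sSup]

lemma isS2AbsSecondary_map_iff (hf : Function.Injective f) {N : Submodule R M} :
    IsS2AbsSecondary (N.map f) ↔ IsS2AbsSecondary N := by
  simp only [isS2AbsSecondary_iff, ne_eq, secRad_map hf, ← map_pointwise_smul,
    map_le_map_iff_of_injective hf, map_eq_bot_iff_of_injective hf]

end Submodule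

theorem stmt15 {M' : Type*} [AddCommGroup M'] [Module R M']
    (f : M →ₗ[R] M') (hf : Function.Injective f) :
    (∀ N : Submodule R M, IsS2AbsSecondary N → IsS2AbsSecondary (N.map f)) ∧
    (∀ N' : Submodule R M', IsS2AbsSecondary N' → N' ≤ LinearMap.range f →
      IsS2AbsSecondary (N'.comap f)) := by
  refine ⟨fun _ => (Submodule.isS2AbsSecondary_map_iff hf).2, fun N' hN' hle => ?_⟩
  rwa [← Submodule.isS2AbsSecondary_map_iff hf, Submodule.map_comap_eq_of_le hle]
end

section
/- Let $N$ be a nonzero submodule of a comultiplication $R$-module $M$. Then $N$ is a secondary module if and only if $\mathrm{Ann}_R(N)$ is a primary ideal of $R$. -/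
open Pointwise

variable {R : Type*} [CommRing R] {M : Type*} [AddCommGroup M] [Module R M]

/-!
If `N` is secondary, then `ab ∈ Ann(N)` with `bN = N` gives `aN = abN = 0`, while otherwise `b` is
nilpotent on `N`; so `Ann(N)` is primary (this holds in any module). Conversely, in a
comultiplication module a submodule is determined by its annihilator, and
`Ann(rN) = (Ann(N) : r)`, which equals `Ann(N)` when `Ann(N)` is primary and `r ∉ √Ann(N)`;
hence `rN = N` for every such `r`, while every `r ∈ √Ann(N)` is nilpotent on `N`.
-/

namespace Submodule

theorem pointwise_smul_eq_bot_iff_mem_annihilator {R M : Type*} [CommSemiring R]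
    [AddCommMonoid M] [Module R M] {r : R} {N : Submodule R M} :
    r • N = ⊥ ↔ r ∈ N.annihilator := by
  rw [← ideal_span_singleton_smul, ← le_annihilator_iff, Ideal.span_singleton_le_iff_mem]

theorem mem_annihilator_pointwise_smul_iff {R M : Type*} [CommSemiring R]
    [AddCommMonoid M] [Module R M] {r s : R} {N : Submodule R M} :
    s ∈ (r • N).annihilator ↔ s * r ∈ N.annihilator := by
  rw [← pointwise_smul_eq_bot_iff_mem_annihilator, ← pointwise_smul_eq_bot_iff_mem_annihilator,
    mul_smul]

theorem exists_pow_smul_eq_bot_of_mem_radical_annihilator {R M : Type*} [CommSemiring R]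
    [AddCommMonoid M] [Module R M] {r : R} {N : Submodule R M}
    (hr : r ∈ N.annihilator.radical) : ∃ t : ℕ, 0 < t ∧ r ^ t • N = ⊥ := by
  obtain ⟨n, hn⟩ := hr
  refine ⟨n + 1, n.succ_pos, pointwise_smul_eq_bot_iff_mem_annihilator.2 ?_⟩
  rw [pow_succ]
  exact Ideal.mul_mem_right r _ hn

end Submodule

open Submodule

theorem IsSecondarySubmodule.annihilator_isPrimary {N : Submodule R M}
    (hN : IsSecondarySubmodule N) : N.annihilator.IsPrimary := by
  refine Ideal.isPrimary_iff.2 ⟨annihilator_eq_top_iff.not.2 hN.1, fun {a b} hab => ?_⟩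
  rcases hN.2 b with hb | ⟨t, -, hbt⟩
  · left
    rw [← pointwise_smul_eq_bot_iff_mem_annihilator] at hab ⊢
    rwa [← hb, ← mul_smul]
  · exact Or.inr ⟨t, pointwise_smul_eq_bot_iff_mem_annihilator.1 hbt⟩

namespace IsComultiplication

theorem le_of_annihilator_le (hM : IsComultiplication R M) {K L : Submodule R M}
    (h : L.annihilator ≤ K.annihilator) : K ≤ L :=
  fun m hm => (hM L m).2 fun _ hs => mem_annihilator.1 (h hs) m hm

theorem pointwise_smul_eq_self_of_isPrimary (hM : IsComultiplication R M) {N : Submodule R M}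
    (hN : N.annihilator.IsPrimary) {r : R} (hr : r ∉ N.annihilator.radical) : r • N = N := by
  refine le_antisymm (smul_le_self_of_tower r N) (hM.le_of_annihilator_le fun s hs => ?_)
  exact ((Ideal.isPrimary_iff.1 hN).2 (mem_annihilator_pointwise_smul_iff.1 hs)).resolve_right hr

theorem isSecondarySubmodule_of_isPrimary (hM : IsComultiplication R M) {N : Submodule R M}
    (hN : N ≠ ⊥) (hp : N.annihilator.IsPrimary) : IsSecondarySubmodule N := by
  refine ⟨hN, fun r => ?_⟩
  by_cases hr : r ∈ N.annihilator.radical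
  · exact Or.inr (exists_pow_smul_eq_bot_of_mem_radical_annihilator hr)
  · exact Or.inl (hM.pointwise_smul_eq_self_of_isPrimary hp hr)

end IsComultiplication

theorem stmt18 (hM : IsComultiplication R M) (N : Submodule R M) (hN : N ≠ ⊥) :
    IsSecondarySubmodule N ↔ (Submodule.annihilator N).IsPrimary :=
  ⟨IsSecondarySubmodule.annihilator_isPrimary, hM.isSecondarySubmodule_of_isPrimary hN⟩
end
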